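/- For given base functions b, b' ∈ L^p(I) (1 ≤ p ≤ ∞) and every seed function f ∈ L^p(I), it holds that ‖(f *_T b) − (f *_T b')‖_p ≤ (Λ/(1−Λ)) ‖b − b'‖_p. -/

import Mathlib

open MeasureTheory ENNReal

noncomputable section

/-- The inverse of the increasing affine map `L n` sending `[x 0, x N]` onto
`[x n, x (n+1)]` (so `L n (x 0) = x n.castSucc` and `L n (x N) = x n.succ`). -/
def Linv {N : ℕ} (x : Fin (N + 1) → ℝ) (n : Fin N) (y : ℝ) : ℝ :=
  x 0 + (y - x n.castSucc) * (x (Fin.last N) - x 0) / (x n.succ - x n.castSucc)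

/-- The subinterval `I n` of the partition: `[x 0, x 1]` for `n = 0` and
`(x n, x (n+1)]` otherwise. -/
def subInt {N : ℕ} (x : Fin (N + 1) → ℝ) (n : Fin N) : Set ℝ :=
  if n.val = 0 then Set.Icc (x n.castSucc) (x n.succ)
  else Set.Ioc (x n.castSucc) (x n.succ)

/-- `h` is the image of `g` under the Read–Bajraktarević operator `T_{f,b}` with
scale functions `α`, almost everywhere: on each `I n`,
`h = f + (α n ∘ Lₙ⁻¹) · ((g - b) ∘ Lₙ⁻¹)`. -/
def RBEq {N : ℕ} (μ : Measure ℝ) (x : Fin (N + 1) → ℝ) (α : Fin N → ℝ → ℝ)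
    (f b g h : ℝ → ℝ) : Prop :=
  ∀ n : Fin N, ∀ᵐ t ∂μ, t ∈ subInt x n →
    h t = f t + α n (Linv x n t) * (g (Linv x n t) - b (Linv x n t))

/-- `h` satisfies the self-referential equation of `T_{f,b}`, i.e. `h` is a fixed
point of `T_{f,b}`; `h` is then the fractal convolution `f *_T b`. -/
def SelfRef {N : ℕ} (μ : Measure ℝ) (x : Fin (N + 1) → ℝ) (α : Fin N → ℝ → ℝ)
    (f b h : ℝ → ℝ) : Prop :=
  RBEq μ x α f b h h

/-! On each `I n`, `Linv x n` pushes Lebesgue measure forward to `|I n| / |I|` times Lebesgue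
measure on `I`; these weights sum to `1`, so the map `piecewiseLinv x`, equal to `Linv x n` on
`I n`, preserves Lebesgue measure on `I`. Subtracting the two self-referential equations cancels
`f`, and with `D = f *_T b - f *_T b'` gives `|D| ≤ Λ |(D - (b - b')) ∘ piecewiseLinv x|` a.e.
Hence `‖D‖_p ≤ Λ ‖D - (b - b')‖_p ≤ Λ (‖D‖_p + ‖b - b'‖_p)`, which rearranges to the claim
because `Λ < 1`. -/

open Set Function

theorem MeasureTheory.Lp.ae_norm_le_norm_top {α E : Type*} [MeasurableSpace α] {μ : Measure α}
    [NormedAddCommGroup E] (f : Lp E ∞ μ) : ∀ᵐ s ∂μ, ‖f s‖ ≤ ‖f‖ := by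
  filter_upwards [enorm_ae_le_eLpNormEssSup (f : α → E) μ] with s hs
  rw [Lp.norm_def, eLpNorm_exponent_top]
  have hfin : eLpNormEssSup f μ ≠ ∞ :=
    eLpNorm_exponent_top (f := (f : α → E)) ▸ Lp.eLpNorm_ne_top f
  simpa using ENNReal.toReal_mono hfin hs

theorem map_affine_volume_restrict_Ioc {c : ℝ} (hc : 0 < c) (d a b : ℝ) :
    Measure.map (fun t => c * t + d) (volume.restrict (Ioc a b))
      = ENNReal.ofReal c⁻¹ • volume.restrict (Ioc (c * a + d) (c * b + d)) := by
  have hemb : MeasurableEmbedding (fun t : ℝ => c * t + d) :=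
    ((Homeomorph.mulLeft₀ c hc.ne').trans (Homeomorph.addRight d)).measurableEmbedding
  have hpre : (fun t => c * t + d) ⁻¹' Ioc (c * a + d) (c * b + d) = Ioc a b := by
    ext t
    simp only [mem_preimage, mem_Ioc, add_le_add_iff_right, add_lt_add_iff_right,
      mul_lt_mul_iff_right₀ hc, mul_le_mul_iff_right₀ hc]
  have hmap : Measure.map (fun t => c * t + d) volume = ENNReal.ofReal c⁻¹ • volume := by
    rw [show (fun t => c * t + d) = (· + d) ∘ (c * ·) from rfl,
      ← Measure.map_map (measurable_add_const d) (measurable_const_mul c),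
      Real.map_volume_mul_left hc.ne', Measure.map_smul, map_add_right_eq_self,
      abs_of_pos (inv_pos.2 hc)]
  rw [← hpre, ← hemb.restrict_map, hmap, Measure.restrict_smul]

theorem Fin.sum_univ_succ_sub_castSucc {M : Type*} [AddCommGroup M] {N : ℕ}
    (f : Fin (N + 1) → M) : ∑ n : Fin N, (f n.succ - f n.castSucc) = f (Fin.last N) - f 0 := by
  rw [Finset.sum_sub_distrib, eq_sub_of_add_eq' (Fin.sum_univ_succ f).symm,
    eq_sub_of_add_eq (Fin.sum_univ_castSucc f).symm]
  abel

section Partition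

variable {β : Type*} {N : ℕ}

theorem pairwise_disjoint_Ioc_succ [Preorder β] {x : Fin (N + 1) → β} (hx : Monotone x) :
    Pairwise (Disjoint on fun n : Fin N => Ioc (x n.castSucc) (x n.succ)) :=
  (pairwise_disjoint_on _).2 fun _ _ hmn =>
    Ioc_disjoint_Ioc_of_le (hx (Fin.succ_le_castSucc_iff.2 hmn))

theorem iUnion_Ioc_succ [LinearOrder β] {x : Fin (N + 1) → β} (hx : Monotone x) :
    ⋃ n : Fin N, Ioc (x n.castSucc) (x n.succ) = Ioc (x 0) (x (Fin.last N)) := by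
  induction N with
  | zero => simp
  | succ N ih =>
    have hinit := ih (hx.comp Fin.strictMono_castSucc.monotone)
    simp only [comp_apply, ← Fin.succ_castSucc] at hinit
    rw [iUnion_fin_add_one_eq_iUnion_castSucc, comp_def, hinit]
    exact Ioc_union_Ioc_eq_Ioc (hx (Fin.zero_le _)) (hx (Fin.castSucc_le_succ _))

variable {x : Fin (N + 1) → ℝ}

theorem Ioc_subset_subInt (x : Fin (N + 1) → ℝ) (n : Fin N) :
    Ioc (x n.castSucc) (x n.succ) ⊆ subInt x n := by
  unfold subInt
  split_ifs
  exacts [Ioc_subset_Icc_self, subset_rfl]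

theorem volume_restrict_Ioc_eq_sum (hx : Monotone x) :
    volume.restrict (Ioc (x 0) (x (Fin.last N)))
      = Measure.sum fun n : Fin N => volume.restrict (Ioc (x n.castSucc) (x n.succ)) := by
  rw [← iUnion_Ioc_succ hx,
    Measure.restrict_iUnion (pairwise_disjoint_Ioc_succ hx) fun _ => measurableSet_Ioc]

theorem map_Linv_volume_restrict_Ioc (hx : StrictMono x) (n : Fin N) :
    Measure.map (Linv x n) (volume.restrict (Ioc (x n.castSucc) (x n.succ)))
      = ENNReal.ofReal ((x n.succ - x n.castSucc) / (x (Fin.last N) - x 0))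
          • volume.restrict (Ioc (x 0) (x (Fin.last N))) := by
  have hlen : 0 < x n.succ - x n.castSucc := sub_pos.2 (hx n.castSucc_lt_succ)
  have hLen : 0 < x (Fin.last N) - x 0 := by
    linarith [hx.monotone (Fin.zero_le n.castSucc), hx.monotone (Fin.le_last n.succ)]
  set c := (x (Fin.last N) - x 0) / (x n.succ - x n.castSucc)
  have hLinv : Linv x n = fun t => c * t + (x 0 - c * x n.castSucc) := by
    funext t
    simp only [Linv, c]
    ring
  rw [hLinv, map_affine_volume_restrict_Ioc (div_pos hLen hlen), inv_div]
  congr 3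
  · ring
  · simp only [c]
    field_simp
    ring

variable (x) in
def piecewiseLinv (t : ℝ) : ℝ :=
  ∑ n : Fin N, (Ioc (x n.castSucc) (x n.succ)).indicator (Linv x n) t

theorem piecewiseLinv_eq (hx : Monotone x) {n : Fin N} {t : ℝ}
    (ht : t ∈ Ioc (x n.castSucc) (x n.succ)) : piecewiseLinv x t = Linv x n t := by
  rw [piecewiseLinv, Finset.sum_eq_single n, indicator_of_mem ht]
  · exact fun m _ hmn => indicator_of_notMem
      (disjoint_right.1 (pairwise_disjoint_Ioc_succ hx hmn) ht) _
  · simp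

variable (x) in
theorem measurable_piecewiseLinv : Measurable (piecewiseLinv x) := by
  refine Finset.measurable_fun_sum _ fun n _ => Measurable.indicator ?_ measurableSet_Ioc
  unfold Linv
  fun_prop

theorem measurePreserving_piecewiseLinv (hx : StrictMono x) :
    MeasurePreserving (piecewiseLinv x) (volume.restrict (Icc (x 0) (x (Fin.last N))))
      (volume.restrict (Icc (x 0) (x (Fin.last N)))) := by
  refine ⟨measurable_piecewiseLinv x, ?_⟩
  rw [← Measure.restrict_congr_set Ioc_ae_eq_Icc]
  set μ := volume.restrict (Ioc (x 0) (x (Fin.last N)))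
  calc Measure.map (piecewiseLinv x) μ
      = Measure.sum fun n : Fin N =>
          Measure.map (Linv x n) (volume.restrict (Ioc (x n.castSucc) (x n.succ))) := by
        rw [show μ = _ from volume_restrict_Ioc_eq_sum hx.monotone,
          Measure.map_sum (measurable_piecewiseLinv x).aemeasurable]
        congr! 2 with n
        refine Measure.map_congr ?_
        filter_upwards [ae_restrict_mem measurableSet_Ioc] with t ht
        exact piecewiseLinv_eq hx.monotone ht
    _ = ENNReal.ofReal ((x (Fin.last N) - x 0) / (x (Fin.last N) - x 0)) • μ := by
        simp only [map_Linv_volume_restrict_Ioc hx, Measure.sum_fintype, ← Finset.sum_smul]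
        rw [← ENNReal.ofReal_sum_of_nonneg, ← Finset.sum_div, Fin.sum_univ_succ_sub_castSucc]
        exact fun n _ => div_nonneg (sub_nonneg.2 (hx.monotone n.castSucc_le_succ))
          (sub_nonneg.2 (hx.monotone (Fin.zero_le _)))
    _ = μ := by
        rcases (hx.monotone (Fin.zero_le (Fin.last N))).lt_or_eq with hlt | heq
        · rw [div_self (sub_ne_zero.2 hlt.ne'), ENNReal.ofReal_one, one_smul]
        · simp [μ, heq]

theorem RBEq.ae_norm_sub_le (hx : StrictMono x) {μ : Measure ℝ}
    (hμ : μ = volume.restrict (Icc (x 0) (x (Fin.last N)))) {α : Fin N → ℝ → ℝ} {Λ : ℝ}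
    (hα : ∀ n, ∀ᵐ s ∂μ, ‖α n s‖ ≤ Λ) {f b b' g g' h h' : ℝ → ℝ}
    (hh : RBEq μ x α f b g h) (hh' : RBEq μ x α f b' g' h') :
    ∀ᵐ t ∂μ, ‖h t - h' t‖ ≤ Λ * ‖(g - b - (g' - b')) (piecewiseLinv x t)‖ := by
  subst hμ
  have hΦ := (measurePreserving_piecewiseLinv hx).quasiMeasurePreserving
  have hαΦ : ∀ᵐ t ∂volume.restrict (Icc (x 0) (x (Fin.last N))),
      ∀ n, ‖α n (piecewiseLinv x t)‖ ≤ Λ :=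
    ae_all_iff.2 fun n => hΦ.ae (hα n)
  have hpiece : ∀ᵐ t ∂volume.restrict (Icc (x 0) (x (Fin.last N))),
      ∃ n, t ∈ subInt x n ∧ piecewiseLinv x t = Linv x n t := by
    rw [← Measure.restrict_congr_set Ioc_ae_eq_Icc]
    filter_upwards [ae_restrict_mem measurableSet_Ioc] with t ht
    rw [← iUnion_Ioc_succ hx.monotone] at ht
    obtain ⟨n, hn⟩ := mem_iUnion.1 ht
    exact ⟨n, Ioc_subset_subInt x n hn, piecewiseLinv_eq hx.monotone hn⟩
  filter_upwards [hαΦ, hpiece, ae_all_iff.2 hh, ae_all_iff.2 hh']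
    with t hαt ⟨n, hn, hΦn⟩ ht ht'
  rw [ht n hn, ht' n hn, ← hΦn]
  set s := piecewiseLinv x t
  calc ‖f t + α n s * (g s - b s) - (f t + α n s * (g' s - b' s))‖
      = ‖α n s‖ * ‖(g - b - (g' - b')) s‖ := by
        rw [← norm_mul]
        congr 1
        simp only [Pi.sub_apply]
        ring
    _ ≤ Λ * ‖(g - b - (g' - b')) s‖ := by gcongr; exact hαt n

end Partition

theorem fractal_convolution_base_stability_general
    (N : ℕ) (x : Fin (N + 1) → ℝ) (hx : StrictMono x)
    (μ : Measure ℝ) (hμ : μ = volume.restrict (Set.Icc (x 0) (x (Fin.last N))))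
    (p : ℝ≥0∞) [Fact (1 ≤ p)]
    (α : Fin N → Lp ℝ ∞ μ)
    (Λ : ℝ) (hΛdef : Λ = ⨆ n : Fin N, ‖α n‖) (hΛ : Λ < 1)
    (f b b' : Lp ℝ p μ) (fb fb' : Lp ℝ p μ)
    (hfb : SelfRef μ x (fun n => ⇑(α n)) ⇑f ⇑b ⇑fb)
    (hfb' : SelfRef μ x (fun n => ⇑(α n)) ⇑f ⇑b' ⇑fb') :
    ‖fb - fb'‖ ≤ Λ / (1 - Λ) * ‖b - b'‖ := by
  have hΦ : MeasurePreserving (piecewiseLinv x) μ μ := hμ ▸ measurePreserving_piecewiseLinv hx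
  have hΛ0 : 0 ≤ Λ := hΛdef ▸ Real.iSup_nonneg fun n => norm_nonneg _
  have hα : ∀ n, ∀ᵐ s ∂μ, ‖α n s‖ ≤ Λ := fun n =>
    (Lp.ae_norm_le_norm_top (α n)).mono fun s hs =>
      hs.trans (hΛdef ▸ le_ciSup (Set.finite_range fun n => ‖α n‖).bddAbove n)
  set W : Lp ℝ p μ := fb - b - (fb' - b')
  have hW : ⇑W =ᵐ[μ] ⇑fb - ⇑b - (⇑fb' - ⇑b') :=
    (Lp.coeFn_sub _ _).trans ((Lp.coeFn_sub _ _).sub (Lp.coeFn_sub _ _))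
  have hcontract : ‖fb - fb'‖ ≤ Λ * ‖W‖ := by
    rw [← Lp.norm_compMeasurePreserving W hΦ]
    refine Lp.norm_le_mul_norm_of_ae_le_mul ?_
    filter_upwards [RBEq.ae_norm_sub_le hx hμ hα hfb hfb', Lp.coeFn_sub fb fb',
      Lp.coeFn_compMeasurePreserving W hΦ, hΦ.quasiMeasurePreserving.ae_eq hW]
      with t ht hsub hcomp hWt
    simp only [comp_apply] at hcomp hWt
    rwa [hsub, hcomp, hWt]
  have hW_le : ‖W‖ ≤ ‖fb - fb'‖ + ‖b - b'‖ := by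
    rw [show W = fb - fb' - (b - b') by simp only [W]; abel]
    exact norm_sub_le _ _
  have hself : ‖fb - fb'‖ ≤ Λ * (‖fb - fb'‖ + ‖b - b'‖) := hcontract.trans (by gcongr)
  rw [div_mul_eq_mul_div, le_div_iff₀ (sub_pos.2 hΛ)]
  linarith

/-- For base functions `b, b'` and any seed function `f`,
`‖(f *_T b) − (f *_T b')‖_p ≤ (Λ/(1−Λ)) ‖b − b'‖_p`. -/
theorem fractal_convolution_base_stability
    (N : ℕ) (hN : 2 ≤ N) (x : Fin (N + 1) → ℝ) (hx : StrictMono x)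
    (μ : Measure ℝ) (hμ : μ = volume.restrict (Set.Icc (x 0) (x (Fin.last N))))
    (p : ℝ≥0∞) [Fact (1 ≤ p)]
    (α : Fin N → Lp ℝ ∞ μ)
    (Λ : ℝ) (hΛdef : Λ = ⨆ n : Fin N, ‖α n‖) (hΛ : Λ < 1)
    (f b b' : Lp ℝ p μ) (fb fb' : Lp ℝ p μ)
    (hfb : SelfRef μ x (fun n => ⇑(α n)) ⇑f ⇑b ⇑fb)
    (hfb' : SelfRef μ x (fun n => ⇑(α n)) ⇑f ⇑b' ⇑fb') :
    ‖fb - fb'‖ ≤ Λ / (1 - Λ) * ‖b - b'‖ :=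
  fractal_convolution_base_stability_general N x hx μ hμ p α Λ hΛdef hΛ f b b' fb fb' hfb hfb'
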